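/- Let g,h : ℝ² → ℝ be smooth functions satisfying g(0,0) = h(0,0) = 0, g_u(0,0) = g_vv(0,0), h_u(0,0) = h_vv(0,0), h_vvv(0,0) = 0, and g_vvv(0,0) > 0. Let f = (f₁,f₂,f₃) : ℝ² → ℝ³ be defined by f(u,v) = (u, (v²/2 − u)·g_vv(u,v) − v·g_v(u,v) + g(u,v), (v²/2 − u)·h_vv(u,v) − v·h_v(u,v) + h(u,v)), let ν₂(u,v) = (h_vvv·(f₂)_u − g_vvv·(f₃)_u, −h_vvv, g_vvv)(u,v), and let ν = ν₂/|ν₂| on a neighborhood of the origin where ν₂ ≠ 0. Then f_uv(0,0) = (0, −g_vvv(0,0), 0), |f_uv(0,0) × f_u(0,0)|² = g_vvv(0,0)², |f_u(0,0)| = 1, and ⟨f_uv(0,0), ν_v(0,0)⟩ = h_vvvv(0,0). Consequently the quantity |f_u|³·|⟨f_uv, ν_v⟩| / |f_uv × f_u|² evaluated at (0,0) equals |h_vvvv(0,0)| / g_vvv(0,0)². -/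

import Mathlib

/-- Euclidean inner product on `ℝ × ℝ × ℝ`. -/
def dot3 (a b : ℝ × ℝ × ℝ) : ℝ := a.1 * b.1 + a.2.1 * b.2.1 + a.2.2 * b.2.2

/-- Euclidean norm on `ℝ × ℝ × ℝ`. -/
noncomputable def norm3 (a : ℝ × ℝ × ℝ) : ℝ := Real.sqrt (dot3 a a)

/-- Cross product on `ℝ × ℝ × ℝ`. -/
def cross3 (a b : ℝ × ℝ × ℝ) : ℝ × ℝ × ℝ :=
  (a.2.1 * b.2.2 - a.2.2 * b.2.1,
   a.2.2 * b.1 - a.1 * b.2.2,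
   a.1 * b.2.1 - a.2.1 * b.1)

noncomputable section

/-- Partial derivative in the first variable. -/
def pdu (F : ℝ × ℝ → ℝ) : ℝ × ℝ → ℝ := fun p => fderiv ℝ F p (1, 0)

/-- Partial derivative in the second variable. -/
def pdv (F : ℝ × ℝ → ℝ) : ℝ × ℝ → ℝ := fun p => fderiv ℝ F p (0, 1)

theorem pdu_contDiff {F : ℝ × ℝ → ℝ} (hF : ContDiff ℝ (⊤ : ℕ∞) F) : ContDiff ℝ (⊤ : ℕ∞) (pdu F) :=
  (hF.fderiv_right (by simp)).clm_apply contDiff_const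

theorem pdv_contDiff {F : ℝ × ℝ → ℝ} (hF : ContDiff ℝ (⊤ : ℕ∞) F) : ContDiff ℝ (⊤ : ℕ∞) (pdv F) :=
  (hF.fderiv_right (by simp)).clm_apply contDiff_const

theorem hasDerivAt_sectV {F : ℝ × ℝ → ℝ} (hF : ContDiff ℝ (⊤ : ℕ∞) F) (u v : ℝ) :
    HasDerivAt (fun w => F (u, w)) (pdv F (u, v)) v := by
  have h1 : HasDerivAt (fun w : ℝ => ((u : ℝ), w)) ((0 : ℝ), (1 : ℝ)) v :=
    (hasDerivAt_const v u).prodMk (hasDerivAt_id v)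
  exact HasFDerivAt.comp_hasDerivAt (x := v) (f := fun w => ((u:ℝ), w))
    (hF.differentiable (by simp) (u, v)).hasFDerivAt h1

theorem hasDerivAt_sectU {F : ℝ × ℝ → ℝ} (hF : ContDiff ℝ (⊤ : ℕ∞) F) (u v : ℝ) :
    HasDerivAt (fun t => F (t, v)) (pdu F (u, v)) u := by
  have h1 : HasDerivAt (fun t : ℝ => (t, (v : ℝ))) ((1 : ℝ), (0 : ℝ)) u :=
    (hasDerivAt_id u).prodMk (hasDerivAt_const u v)
  exact HasFDerivAt.comp_hasDerivAt (x := u) (f := fun t => (t, (v:ℝ)))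
    (hF.differentiable (by simp) (u, v)).hasFDerivAt h1

theorem pd_symm {F : ℝ × ℝ → ℝ} (hF : ContDiff ℝ (⊤ : ℕ∞) F) (p : ℝ × ℝ) :
    pdu (pdv F) p = pdv (pdu F) p := by
  have hdF : Differentiable ℝ (fderiv ℝ F) :=
    (hF.fderiv_right (by simp) : ContDiff ℝ (⊤ : ℕ∞) (fderiv ℝ F)).differentiable (by simp)
  have e1 : pdu (pdv F) p = fderiv ℝ (fderiv ℝ F) p (1, 0) (0, 1) := by
    show fderiv ℝ (fun q => fderiv ℝ F q ((0 : ℝ), (1 : ℝ))) p (1, 0) = _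
    rw [fderiv_clm_apply (hdF p) (differentiableAt_const _)]
    simp
  have e2 : pdv (pdu F) p = fderiv ℝ (fderiv ℝ F) p (0, 1) (1, 0) := by
    show fderiv ℝ (fun q => fderiv ℝ F q ((1 : ℝ), (0 : ℝ))) p (0, 1) = _
    rw [fderiv_clm_apply (hdF p) (differentiableAt_const _)]
    simp
  rw [e1, e2,
    second_derivative_symmetric (fun y => (hF.differentiable (by simp) y).hasFDerivAt)
      (hdF p).hasFDerivAt (1, 0) (0, 1)]

theorem deriv1_eq {g : ℝ → ℝ → ℝ} (hg : ContDiff ℝ (⊤ : ℕ∞) (fun p : ℝ × ℝ => g p.1 p.2))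
    (u v : ℝ) : deriv (g u) v = pdv (fun p : ℝ × ℝ => g p.1 p.2) (u, v) :=
  (hasDerivAt_sectV hg u v).deriv

theorem deriv2_eq {g : ℝ → ℝ → ℝ} (hg : ContDiff ℝ (⊤ : ℕ∞) (fun p : ℝ × ℝ => g p.1 p.2))
    (u v : ℝ) : deriv (deriv (g u)) v = pdv (pdv (fun p : ℝ × ℝ => g p.1 p.2)) (u, v) := by
  have h1 : deriv (g u) = fun w => pdv (fun p : ℝ × ℝ => g p.1 p.2) (u, w) :=
    funext (deriv1_eq hg u)
  rw [h1]
  exact (hasDerivAt_sectV (pdv_contDiff hg) u v).deriv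

theorem deriv3_eq {g : ℝ → ℝ → ℝ} (hg : ContDiff ℝ (⊤ : ℕ∞) (fun p : ℝ × ℝ => g p.1 p.2))
    (u v : ℝ) :
    deriv (deriv (deriv (g u))) v
      = pdv (pdv (pdv (fun p : ℝ × ℝ => g p.1 p.2))) (u, v) := by
  have h1 : deriv (deriv (g u)) = fun w => pdv (pdv (fun p : ℝ × ℝ => g p.1 p.2)) (u, w) :=
    funext (deriv2_eq hg u)
  rw [h1]
  exact (hasDerivAt_sectV (pdv_contDiff (pdv_contDiff hg)) u v).deriv

theorem deriv4_eq {g : ℝ → ℝ → ℝ} (hg : ContDiff ℝ (⊤ : ℕ∞) (fun p : ℝ × ℝ => g p.1 p.2))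
    (u v : ℝ) :
    deriv (deriv (deriv (deriv (g u)))) v
      = pdv (pdv (pdv (pdv (fun p : ℝ × ℝ => g p.1 p.2)))) (u, v) := by
  have h1 : deriv (deriv (deriv (g u)))
      = fun w => pdv (pdv (pdv (fun p : ℝ × ℝ => g p.1 p.2))) (u, w) :=
    funext (deriv3_eq hg u)
  rw [h1]
  exact (hasDerivAt_sectV (pdv_contDiff (pdv_contDiff (pdv_contDiff hg))) u v).deriv

/-- The `u`-partial of the second/third component of the normal form. -/
def Pfun (F : ℝ × ℝ → ℝ) : ℝ × ℝ → ℝ := fun p =>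
  -(pdv (pdv F) p) + (p.2 ^ 2 / 2 - p.1) * pdu (pdv (pdv F)) p
    - p.2 * pdu (pdv F) p + pdu F p

theorem hasDerivAt_P {F : ℝ × ℝ → ℝ} (hF : ContDiff ℝ (⊤ : ℕ∞) F) (u v : ℝ) :
    HasDerivAt
      (fun t => (v ^ 2 / 2 - t) * pdv (pdv F) (t, v) - v * pdv F (t, v) + F (t, v))
      (Pfun F (u, v)) u := by
  have h1 := hasDerivAt_sectU (pdv_contDiff (pdv_contDiff hF)) u v
  have h2 := hasDerivAt_sectU (pdv_contDiff hF) u v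
  have h3 := hasDerivAt_sectU hF u v
  have hlin : HasDerivAt (fun t : ℝ => v ^ 2 / 2 - t) (0 - 1) u :=
    (hasDerivAt_const u (v ^ 2 / 2)).sub (hasDerivAt_id u)
  have H := ((hlin.mul h1).sub ((hasDerivAt_const u v).mul h2)).add h3
  refine H.congr_deriv ?_
  show _ = Pfun F (u, v)
  simp only [Pfun]
  ring

theorem hasDerivAt_P0 {F : ℝ × ℝ → ℝ} (hF : ContDiff ℝ (⊤ : ℕ∞) F) :
    HasDerivAt (fun w => Pfun F (0, w)) (-(pdv (pdv (pdv F)) (0, 0))) 0 := by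
  have h1 := hasDerivAt_sectV (pdv_contDiff (pdv_contDiff hF)) 0 0
  have h2 := hasDerivAt_sectV (pdu_contDiff (pdv_contDiff (pdv_contDiff hF))) 0 0
  have h3 := hasDerivAt_sectV (pdu_contDiff (pdv_contDiff hF)) 0 0
  have h4 := hasDerivAt_sectV (pdu_contDiff hF) 0 0
  have hpoly : HasDerivAt (fun w : ℝ => w ^ 2 / 2 - 0) ((2 : ℕ) * (0:ℝ) ^ (2-1) / 2 - 0) 0 :=
    ((hasDerivAt_pow 2 (0:ℝ)).div_const 2).sub (hasDerivAt_const 0 0)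
  have hid : HasDerivAt (fun w : ℝ => w) 1 0 := hasDerivAt_id 0
  have H := ((h1.neg.add (hpoly.mul h2)).sub (hid.mul h3)).add h4
  refine H.congr_deriv ?_
  rw [pd_symm (pdv_contDiff hF) (0, 0), pd_symm hF (0, 0)]
  norm_num

/-- The restriction of `ν₂` to the line `u = 0`, in terms of partial derivatives. -/
def EE (G H : ℝ × ℝ → ℝ) (w : ℝ) : ℝ × ℝ × ℝ :=
  (pdv (pdv (pdv H)) (0, w) * Pfun G (0, w) - pdv (pdv (pdv G)) (0, w) * Pfun H (0, w),
   -(pdv (pdv (pdv H)) (0, w)),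
   pdv (pdv (pdv G)) (0, w))

theorem key_nu {G H : ℝ × ℝ → ℝ} (hG : ContDiff ℝ (⊤ : ℕ∞) G) (hH : ContDiff ℝ (⊤ : ℕ∞) H)
    (hH3 : pdv (pdv (pdv H)) (0, 0) = 0)
    (hPg : Pfun G (0, 0) = 0) (hPh : Pfun H (0, 0) = 0)
    (ha : 0 < pdv (pdv (pdv G)) (0, 0)) :
    ∃ d1 d3 : ℝ, HasDerivAt (fun w => (norm3 (EE G H w))⁻¹ • EE G H w)
      (d1, -(pdv (pdv (pdv (pdv H))) (0, 0)) / pdv (pdv (pdv G)) (0, 0), d3) 0 := by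
  have hPgd := hasDerivAt_P0 hG
  have hPhd := hasDerivAt_P0 hH
  have hH3d := hasDerivAt_sectV (pdv_contDiff (pdv_contDiff (pdv_contDiff hH))) 0 0
  have hG3d := hasDerivAt_sectV (pdv_contDiff (pdv_contDiff (pdv_contDiff hG))) 0 0
  have hE1 := (hH3d.mul hPgd).sub (hG3d.mul hPhd)
  have hE2 := hH3d.neg
  have hE3 := hG3d
  have hS := ((hE1.mul hE1).add (hE2.mul hE2)).add (hE3.mul hE3)
  have hS0v : (pdv (pdv (pdv H)) ((0:ℝ), (0:ℝ)) * Pfun G (0, 0)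
        - pdv (pdv (pdv G)) (0, 0) * Pfun H (0, 0))
        * (pdv (pdv (pdv H)) (0, 0) * Pfun G (0, 0)
        - pdv (pdv (pdv G)) (0, 0) * Pfun H (0, 0))
      + -(pdv (pdv (pdv H)) (0, 0)) * -(pdv (pdv (pdv H)) (0, 0))
      + pdv (pdv (pdv G)) (0, 0) * pdv (pdv (pdv G)) (0, 0)
      = pdv (pdv (pdv G)) (0, 0) * pdv (pdv (pdv G)) (0, 0) := by
    rw [hH3, hPh]; ring
  have hS0ne : (pdv (pdv (pdv H)) ((0:ℝ), (0:ℝ)) * Pfun G (0, 0)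
        - pdv (pdv (pdv G)) (0, 0) * Pfun H (0, 0))
        * (pdv (pdv (pdv H)) (0, 0) * Pfun G (0, 0)
        - pdv (pdv (pdv G)) (0, 0) * Pfun H (0, 0))
      + -(pdv (pdv (pdv H)) (0, 0)) * -(pdv (pdv (pdv H)) (0, 0))
      + pdv (pdv (pdv G)) (0, 0) * pdv (pdv (pdv G)) (0, 0) ≠ 0 := by
    rw [hS0v]; positivity
  have hN := hS.sqrt hS0ne
  have hNne : Real.sqrt ((pdv (pdv (pdv H)) ((0:ℝ), (0:ℝ)) * Pfun G (0, 0)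
        - pdv (pdv (pdv G)) (0, 0) * Pfun H (0, 0))
        * (pdv (pdv (pdv H)) (0, 0) * Pfun G (0, 0)
        - pdv (pdv (pdv G)) (0, 0) * Pfun H (0, 0))
      + -(pdv (pdv (pdv H)) (0, 0)) * -(pdv (pdv (pdv H)) (0, 0))
      + pdv (pdv (pdv G)) (0, 0) * pdv (pdv (pdv G)) (0, 0)) ≠ 0 := by
    rw [hS0v, Real.sqrt_mul_self ha.le]; exact ha.ne'
  have hNinv := hN.inv hNne
  have hc1 := hNinv.mul hE1
  have hc2' := hNinv.mul hE2
  have hc3 := hNinv.mul hE3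
  have hc2 : HasDerivAt (fun y =>
      (Real.sqrt ((pdv (pdv (pdv H)) (0, y) * Pfun G (0, y)
            - pdv (pdv (pdv G)) (0, y) * Pfun H (0, y))
            * (pdv (pdv (pdv H)) (0, y) * Pfun G (0, y)
            - pdv (pdv (pdv G)) (0, y) * Pfun H (0, y))
          + -(pdv (pdv (pdv H)) (0, y)) * -(pdv (pdv (pdv H)) (0, y))
          + pdv (pdv (pdv G)) (0, y) * pdv (pdv (pdv G)) (0, y)))⁻¹
        * -(pdv (pdv (pdv H)) (0, y)))
      (-(pdv (pdv (pdv (pdv H))) (0, 0)) / pdv (pdv (pdv G)) (0, 0)) 0 := by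
    refine hc2'.congr_deriv ?_
    simp only [Pi.mul_apply, Pi.sub_apply, Pi.add_apply, Pi.neg_apply, Pi.inv_apply]
    rw [hS0v, Real.sqrt_mul_self ha.le, hH3]
    field_simp
    ring
  have htrip := hc1.prodMk (hc2.prodMk hc3)
  have heqfun : (fun w => (norm3 (EE G H w))⁻¹ • EE G H w)
      = (fun w =>
        ((Real.sqrt ((pdv (pdv (pdv H)) (0, w) * Pfun G (0, w)
              - pdv (pdv (pdv G)) (0, w) * Pfun H (0, w))
              * (pdv (pdv (pdv H)) (0, w) * Pfun G (0, w)
              - pdv (pdv (pdv G)) (0, w) * Pfun H (0, w))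
            + -(pdv (pdv (pdv H)) (0, w)) * -(pdv (pdv (pdv H)) (0, w))
            + pdv (pdv (pdv G)) (0, w) * pdv (pdv (pdv G)) (0, w)))⁻¹
            * (pdv (pdv (pdv H)) (0, w) * Pfun G (0, w)
              - pdv (pdv (pdv G)) (0, w) * Pfun H (0, w)),
         (Real.sqrt ((pdv (pdv (pdv H)) (0, w) * Pfun G (0, w)
              - pdv (pdv (pdv G)) (0, w) * Pfun H (0, w))
              * (pdv (pdv (pdv H)) (0, w) * Pfun G (0, w)
              - pdv (pdv (pdv G)) (0, w) * Pfun H (0, w))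
            + -(pdv (pdv (pdv H)) (0, w)) * -(pdv (pdv (pdv H)) (0, w))
            + pdv (pdv (pdv G)) (0, w) * pdv (pdv (pdv G)) (0, w)))⁻¹
            * -(pdv (pdv (pdv H)) (0, w)),
         (Real.sqrt ((pdv (pdv (pdv H)) (0, w) * Pfun G (0, w)
              - pdv (pdv (pdv G)) (0, w) * Pfun H (0, w))
              * (pdv (pdv (pdv H)) (0, w) * Pfun G (0, w)
              - pdv (pdv (pdv G)) (0, w) * Pfun H (0, w))
            + -(pdv (pdv (pdv H)) (0, w)) * -(pdv (pdv (pdv H)) (0, w))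
            + pdv (pdv (pdv G)) (0, w) * pdv (pdv (pdv G)) (0, w)))⁻¹
            * pdv (pdv (pdv G)) (0, w))) := by
    funext w
    simp [EE, norm3, dot3, Prod.smul_def, smul_eq_mul]
  rw [heqfun]
  exact ⟨_, _, htrip⟩
end

/-- Normalized cuspidal curvature computation for the normal form of a
singular point of the second kind: `f_uv(0,0) = (0, −g_vvv(0,0), 0)`,
`|f_uv × f_u|²(0,0) = g_vvv(0,0)²`, `|f_u(0,0)| = 1`,
`⟨f_uv, ν_v⟩(0,0) = h_vvvv(0,0)`, whence
`|f_u|³|⟨f_uv, ν_v⟩|/|f_uv × f_u|²` at the origin equals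
`|h_vvvv(0,0)|/g_vvv(0,0)²` (the formula `μ_c = b₀₄/a₀₃²` up to sign). -/
theorem stmt_18 (g h : ℝ → ℝ → ℝ)
    (hg : ContDiff ℝ (⊤ : ℕ∞) (fun p : ℝ × ℝ => g p.1 p.2))
    (hh : ContDiff ℝ (⊤ : ℕ∞) (fun p : ℝ × ℝ => h p.1 p.2))
    (hg0 : g 0 0 = 0) (hh0 : h 0 0 = 0)
    (hgu : deriv (fun t => g t 0) 0 = deriv (deriv (g 0)) 0)
    (hhu : deriv (fun t => h t 0) 0 = deriv (deriv (h 0)) 0)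
    (hhvvv : deriv (deriv (deriv (h 0))) 0 = 0)
    (hgvvv : 0 < deriv (deriv (deriv (g 0))) 0)
    (f2 f3 : ℝ → ℝ → ℝ)
    (hf2 : ∀ u v : ℝ, f2 u v =
      (v ^ 2 / 2 - u) * deriv (deriv (g u)) v - v * deriv (g u) v + g u v)
    (hf3 : ∀ u v : ℝ, f3 u v =
      (v ^ 2 / 2 - u) * deriv (deriv (h u)) v - v * deriv (h u) v + h u v)
    (f : ℝ → ℝ → ℝ × ℝ × ℝ)
    (hf : ∀ u v : ℝ, f u v = (u, f2 u v, f3 u v))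
    (ν₂ : ℝ → ℝ → ℝ × ℝ × ℝ)
    (hν₂ : ∀ u v : ℝ, ν₂ u v =
      (deriv (deriv (deriv (h u))) v * deriv (fun t => f2 t v) u
          - deriv (deriv (deriv (g u))) v * deriv (fun t => f3 t v) u,
        -(deriv (deriv (deriv (h u))) v), deriv (deriv (deriv (g u))) v))
    (ν : ℝ → ℝ → ℝ × ℝ × ℝ)
    (hν : ∀ᶠ p : ℝ × ℝ in nhds (0, 0),
      ν p.1 p.2 = (norm3 (ν₂ p.1 p.2))⁻¹ • ν₂ p.1 p.2)
    (fu fuv : ℝ → ℝ → ℝ × ℝ × ℝ)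
    (hfu : ∀ u v : ℝ, fu u v = deriv (fun t => f t v) u)
    (hfuv : ∀ u v : ℝ, fuv u v = deriv (fun w => fu u w) v) :
    fuv 0 0 = (0, -(deriv (deriv (deriv (g 0))) 0), 0)
    ∧ norm3 (cross3 (fuv 0 0) (fu 0 0)) ^ 2 = (deriv (deriv (deriv (g 0))) 0) ^ 2
    ∧ norm3 (fu 0 0) = 1
    ∧ dot3 (fuv 0 0) (deriv (fun w => ν 0 w) 0)
        = deriv (deriv (deriv (deriv (h 0)))) 0
    ∧ norm3 (fu 0 0) ^ 3 * |dot3 (fuv 0 0) (deriv (fun w => ν 0 w) 0)|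
          / norm3 (cross3 (fuv 0 0) (fu 0 0)) ^ 2
        = |deriv (deriv (deriv (deriv (h 0)))) 0|
            / (deriv (deriv (deriv (g 0))) 0) ^ 2 := by
  have tg1 := deriv1_eq hg
  have tg2 := deriv2_eq hg
  have tg3 := deriv3_eq hg
  have th1 := deriv1_eq hh
  have th2 := deriv2_eq hh
  have th3 := deriv3_eq hh
  have th4 := deriv4_eq hh
  have ha : 0 < pdv (pdv (pdv (fun p : ℝ × ℝ => g p.1 p.2))) (0, 0) := by
    rw [← tg3 0 0]; exact hgvvv
  have hH30 : pdv (pdv (pdv (fun p : ℝ × ℝ => h p.1 p.2))) (0, 0) = 0 := by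
    rw [← th3 0 0]; exact hhvvv
  have hPg0 : Pfun (fun p : ℝ × ℝ => g p.1 p.2) (0, 0) = 0 := by
    have e1 : deriv (fun t => g t 0) 0 = pdu (fun p : ℝ × ℝ => g p.1 p.2) (0, 0) :=
      (hasDerivAt_sectU hg 0 0).deriv
    have h1 : pdu (fun p : ℝ × ℝ => g p.1 p.2) (0, 0)
        = pdv (pdv (fun p : ℝ × ℝ => g p.1 p.2)) (0, 0) := by
      rw [← e1, ← tg2 0 0]; exact hgu
    have h1' : pdu (fun p : ℝ × ℝ => g p.1 p.2) 0
        = pdv (pdv (fun p : ℝ × ℝ => g p.1 p.2)) 0 := h1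
    norm_num [Pfun, h1', h1]
  have hPh0 : Pfun (fun p : ℝ × ℝ => h p.1 p.2) (0, 0) = 0 := by
    have e1 : deriv (fun t => h t 0) 0 = pdu (fun p : ℝ × ℝ => h p.1 p.2) (0, 0) :=
      (hasDerivAt_sectU hh 0 0).deriv
    have h1 : pdu (fun p : ℝ × ℝ => h p.1 p.2) (0, 0)
        = pdv (pdv (fun p : ℝ × ℝ => h p.1 p.2)) (0, 0) := by
      rw [← e1, ← th2 0 0]; exact hhu
    have h1' : pdu (fun p : ℝ × ℝ => h p.1 p.2) 0
        = pdv (pdv (fun p : ℝ × ℝ => h p.1 p.2)) 0 := h1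
    norm_num [Pfun, h1', h1]
  have key2 : ∀ u v : ℝ,
      HasDerivAt (fun t => f2 t v) (Pfun (fun p : ℝ × ℝ => g p.1 p.2) (u, v)) u := by
    intro u v
    have hfun : (fun t => f2 t v) = fun t =>
        (v ^ 2 / 2 - t) * pdv (pdv (fun p : ℝ × ℝ => g p.1 p.2)) (t, v)
          - v * pdv (fun p : ℝ × ℝ => g p.1 p.2) (t, v) + g t v := by
      funext t; rw [hf2, tg2, tg1]
    rw [hfun]
    exact hasDerivAt_P hg u v
  have key3 : ∀ u v : ℝ,
      HasDerivAt (fun t => f3 t v) (Pfun (fun p : ℝ × ℝ => h p.1 p.2) (u, v)) u := by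
    intro u v
    have hfun : (fun t => f3 t v) = fun t =>
        (v ^ 2 / 2 - t) * pdv (pdv (fun p : ℝ × ℝ => h p.1 p.2)) (t, v)
          - v * pdv (fun p : ℝ × ℝ => h p.1 p.2) (t, v) + h t v := by
      funext t; rw [hf3, th2, th1]
    rw [hfun]
    exact hasDerivAt_P hh u v
  have hfu0 : ∀ v : ℝ, fu 0 v = (1, Pfun (fun p : ℝ × ℝ => g p.1 p.2) (0, v),
      Pfun (fun p : ℝ × ℝ => h p.1 p.2) (0, v)) := by
    intro v
    rw [hfu]
    have hfun : (fun t => f t v) = fun t => (t, f2 t v, f3 t v) := funext fun t => hf t v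
    rw [hfun]
    exact ((hasDerivAt_id 0).prodMk ((key2 0 v).prodMk (key3 0 v))).deriv
  have hfuv00 : fuv 0 0 = (0, -(pdv (pdv (pdv (fun p : ℝ × ℝ => g p.1 p.2))) (0, 0)), 0) := by
    rw [hfuv]
    have hfun : (fun w => fu 0 w) = fun w => ((1 : ℝ),
        Pfun (fun p : ℝ × ℝ => g p.1 p.2) (0, w),
        Pfun (fun p : ℝ × ℝ => h p.1 p.2) (0, w)) := funext hfu0
    rw [hfun]
    have := ((hasDerivAt_const (0:ℝ) (1:ℝ)).prodMk
      ((hasDerivAt_P0 hg).prodMk (hasDerivAt_P0 hh))).deriv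
    rw [this, hH30, neg_zero]
  have hfu00 : fu 0 0 = (1, 0, 0) := by rw [hfu0 0, hPg0, hPh0]
  have hν₂eq : ∀ w : ℝ, ν₂ 0 w
      = EE (fun p : ℝ × ℝ => g p.1 p.2) (fun p : ℝ × ℝ => h p.1 p.2) w := by
    intro w
    rw [hν₂ 0 w, th3 0 w, tg3 0 w, (key2 0 w).deriv, (key3 0 w).deriv]
    rfl
  have hline : Filter.Tendsto (fun w : ℝ => ((0 : ℝ), w)) (nhds 0) (nhds ((0 : ℝ), (0 : ℝ))) :=
    Continuous.tendsto (continuous_const.prodMk continuous_id) 0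
  have hνline : (fun w => ν 0 w) =ᶠ[nhds (0 : ℝ)] fun w =>
      (norm3 (EE (fun p : ℝ × ℝ => g p.1 p.2) (fun p : ℝ × ℝ => h p.1 p.2) w))⁻¹
        • EE (fun p : ℝ × ℝ => g p.1 p.2) (fun p : ℝ × ℝ => h p.1 p.2) w := by
    filter_upwards [hline.eventually hν] with w hw
    rw [hw, hν₂eq w]
  obtain ⟨d1, d3, hD⟩ := key_nu hg hh hH30 hPg0 hPh0 ha
  have hνd : deriv (fun w => ν 0 w) 0
      = (d1, -(pdv (pdv (pdv (pdv (fun p : ℝ × ℝ => h p.1 p.2)))) (0, 0))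
          / pdv (pdv (pdv (fun p : ℝ × ℝ => g p.1 p.2))) (0, 0), d3) := by
    rw [hνline.deriv_eq]; exact hD.deriv
  have G1 : fuv 0 0 = (0, -(deriv (deriv (deriv (g 0))) 0), 0) := by
    rw [tg3 0 0]; exact hfuv00
  have G3 : norm3 (fu 0 0) = 1 := by
    rw [hfu00]; simp [norm3, dot3]
  have G2 : norm3 (cross3 (fuv 0 0) (fu 0 0)) ^ 2 = (deriv (deriv (deriv (g 0))) 0) ^ 2 := by
    rw [tg3 0 0, hfuv00, hfu00]
    have hc : cross3 (0, -(pdv (pdv (pdv (fun p : ℝ × ℝ => g p.1 p.2))) (0, 0)), 0)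
        ((1 : ℝ), (0 : ℝ), (0 : ℝ))
        = (0, 0, pdv (pdv (pdv (fun p : ℝ × ℝ => g p.1 p.2))) (0, 0)) := by
      simp [cross3]
    rw [hc]
    show Real.sqrt (dot3 _ _) ^ 2 = _
    rw [show dot3 ((0:ℝ), (0:ℝ), pdv (pdv (pdv (fun p : ℝ × ℝ => g p.1 p.2))) (0, 0))
        ((0:ℝ), (0:ℝ), pdv (pdv (pdv (fun p : ℝ × ℝ => g p.1 p.2))) (0, 0))
        = (pdv (pdv (pdv (fun p : ℝ × ℝ => g p.1 p.2))) (0, 0)) ^ 2 by simp [dot3]; ring]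
    exact Real.sq_sqrt (by positivity)
  have G4 : dot3 (fuv 0 0) (deriv (fun w => ν 0 w) 0)
      = deriv (deriv (deriv (deriv (h 0)))) 0 := by
    rw [th4 0 0, hfuv00, hνd]
    show (0 : ℝ) * d1 + _ + (0 : ℝ) * d3 = _
    rw [zero_mul, zero_mul, add_zero, zero_add]
    rw [div_eq_mul_inv]
    have ha' : pdv (pdv (pdv (fun p : ℝ × ℝ => g p.1 p.2))) 0 ≠ 0 := ne_of_gt ha
    field_simp
  refine ⟨G1, G2, G3, G4, ?_⟩
  rw [G2, G3, G4]
  norm_num
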